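/- Let A be a strongly-fibred attractor of the IFS F with basin B(A) and let x_0 ∈ B(A). Then the set of sequences σ = (σ_n)_{n≥1} ∈ Σ^∞ for which the chaos game orbit (x_k)_{k≥0} of x_0 driven by σ fails to satisfy C_∞(x_0,σ) = A (equivalently, for which the tails {x_n : n ≥ p} do not converge to A in the Hausdorff metric as p → ∞) is σ-porous in the Cantor space (Σ^∞, ϱ) with the Baire metric. -/

import Mathlib

/-!
For `x₀` in the basin, the orbit point `x_k` lies in `F^k{x₀}`, which converges to `A`, so
`C_∞(x₀,σ) ⊆ A` for every `σ`. If `σ` is disjunctive (contains every finite word), then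
`A ⊆ C_∞(x₀,σ)`: given `a ∈ A` and `ε > 0`, strong fibredness gives a fibre `A_ρ` inside
`B(a,ε)`; since `F(A) ⊆ A` the stages `f_{ρ_1} ∘ ⋯ ∘ f_{ρ_K}(A)` are nested compact sets, so one
of them, and hence by continuity the image of a neighbourhood of `A`, lies in `B(a,ε)`. A late
occurrence in `σ` of the reversed word `ρ_K ⋯ ρ_1` therefore moves an orbit point close to `A`
into `B(a,ε)`.

So every faulty `σ` avoids some finite word `w`. For fixed `w` the sequences avoiding `w` form a
porous set: inside the Baire ball of radius `r ≈ 2^{-n}` around such a sequence, writing `w` at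
positions `n, …, n + |w| - 1` gives a ball of radius `2^{-|w|-1} r` whose elements all contain `w`.
-/

open Metric Filter Set MeasureTheory

variable {X : Type*} [MetricSpace X] [CompleteSpace X]
variable {Λ : Type*} [Fintype Λ] [Nonempty Λ]

/-- The Hutchinson operator of the IFS given by the maps `f a`, `a : Λ`. -/
def Hutch (f : Λ → X → X) (B : Set X) : Set X := ⋃ a : Λ, f a '' B

/-- `A` attracts, under iteration of the Hutchinson operator, every nonempty
compact subset of `U`, in the Hausdorff metric. -/
def Attracts (f : Λ → X → X) (A U : Set X) : Prop :=
  ∀ B : Set X, B.Nonempty → IsCompact B → B ⊆ U →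
    Tendsto (fun k : ℕ => hausdorffDist ((Hutch f)^[k] B) A) atTop (nhds 0)

/-- `A` is an attractor of the IFS `f`: a nonempty compact set admitting an open
neighbourhood `U ⊇ A` all of whose nonempty compact subsets are attracted to `A`. -/
def IsAttractor (f : Λ → X → X) (A : Set X) : Prop :=
  A.Nonempty ∧ IsCompact A ∧ ∃ U : Set X, IsOpen U ∧ A ⊆ U ∧ Attracts f A U

/-- The basin of the attractor `A`: the union of all open `U ⊇ A` from which `A` attracts. -/
def basin (f : Λ → X → X) (A : Set X) : Set X :=
  ⋃₀ {U : Set X | IsOpen U ∧ A ⊆ U ∧ Attracts f A U}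

/-- The chaos game orbit of `x₀` driven by the sequence `σ` (0-indexed: `σ 0` acts first). -/
def orbit (f : Λ → X → X) (σ : ℕ → Λ) (x₀ : X) : ℕ → X
  | 0 => x₀
  | k + 1 => f (σ k) (orbit f σ x₀ k)

/-- `C_K(x₀,σ)`: the closure of the tail `{x_k : k ≥ K}` of the chaos game orbit. -/
def tailSet (f : Λ → X → X) (σ : ℕ → Λ) (x₀ : X) (K : ℕ) : Set X :=
  closure {y : X | ∃ k : ℕ, K ≤ k ∧ orbit f σ x₀ k = y}

/-- `C_∞(x₀,σ) = ⋂_K C_K(x₀,σ)`. -/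
def Cinf (f : Λ → X → X) (σ : ℕ → Λ) (x₀ : X) : Set X :=
  ⋂ K : ℕ, tailSet f σ x₀ K

/-- For a word `w = (σ₁, …, σ_m)`, `wordApply f w = f_{σ_m} ∘ ⋯ ∘ f_{σ_1}`
(the letter `w 0` acts first). -/
def wordApply (f : Λ → X → X) {m : ℕ} (w : Fin m → Λ) (x : X) : X :=
  (List.ofFn w).foldl (fun y a => f a y) x

/-- A sequence of symbols is disjunctive if it contains every finite word
as a block of consecutive letters. -/
def Disjunctive {Γ : Type*} (σ : ℕ → Γ) : Prop :=
  ∀ (m : ℕ) (w : Fin m → Γ), ∃ j : ℕ, ∀ l : Fin m, σ (j + l.1) = w l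

/-- `fibreComp f ρ K = f_{ρ_1} ∘ f_{ρ_2} ∘ ⋯ ∘ f_{ρ_K}` (0-indexed: `f (ρ 0) ∘ ⋯ ∘ f (ρ (K-1))`). -/
def fibreComp (f : Λ → X → X) (ρ : ℕ → Λ) : ℕ → X → X
  | 0 => id
  | K + 1 => fibreComp f ρ K ∘ f (ρ K)

/-- The fibre `A_ρ = ⋂_{K ≥ 1} f_{ρ_1} ∘ ⋯ ∘ f_{ρ_K}(A)` of the attractor `A`. -/
def fibre (f : Λ → X → X) (A : Set X) (ρ : ℕ → Λ) : Set X :=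
  ⋂ K : ℕ, fibreComp f ρ (K + 1) '' A

/-- `A` is strongly fibred: every open set meeting `A` contains a fibre. -/
def StronglyFibred (f : Λ → X → X) (A : Set X) : Prop :=
  ∀ U : Set X, IsOpen U → (U ∩ A).Nonempty → ∃ ρ : ℕ → Λ, fibre f A ρ ⊆ U

open Classical in
/-- The Baire metric `ϱ(x,y) = 2^{-min{i ≥ 1 : x_i ≠ y_i}}` on the Cantor space of
(0-indexed) sequences: here `min` of the 1-indexed paper corresponds to `sInf + 1`. -/
noncomputable def baireDist {Γ : Type*} (x y : ℕ → Γ) : ℝ :=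
  if x = y then 0 else (2 : ℝ) ^ (-((sInf {i : ℕ | x i ≠ y i} : ℕ) : ℤ) - 1)

/-- `Ψ` is porous with respect to the distance function `ρ`. -/
def PorousWith {M : Type*} (ρ : M → M → ℝ) (Ψ : Set M) : Prop :=
  ∃ lam : ℝ, 0 < lam ∧ lam < 1 ∧ ∃ r₀ : ℝ, 0 < r₀ ∧
    ∀ ψ ∈ Ψ, ∀ r : ℝ, 0 < r → r < r₀ →
      ∃ υ : M, {x : M | ρ υ x < lam * r} ⊆ {x : M | ρ ψ x < r} \ Ψ

/-- `Ψ` is σ-porous with respect to `ρ`: a countable union of porous sets. -/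
def SigmaPorousWith {M : Type*} (ρ : M → M → ℝ) (Ψ : Set M) : Prop :=
  ∃ c : ℕ → Set M, (∀ n : ℕ, PorousWith ρ (c n)) ∧ Ψ = ⋃ n : ℕ, c n

open Topology

section Hutchinson

variable {α ι : Type*} {f : ι → α → α}

lemma apply_mem_hutch_iterate_succ {B : Set α} {x : α} {k : ℕ} (hx : x ∈ (Hutch f)^[k] B)
    (a : ι) : f a x ∈ (Hutch f)^[k + 1] B := by
  rw [Function.iterate_succ_apply']
  exact mem_iUnion.2 ⟨a, mem_image_of_mem _ hx⟩

lemma orbit_mem_hutch_iterate (σ : ℕ → ι) (x₀ : α) (k : ℕ) :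
    orbit f σ x₀ k ∈ (Hutch f)^[k] {x₀} := by
  induction k with
  | zero => rfl
  | succ k ih => exact apply_mem_hutch_iterate_succ ih (σ k)

lemma Set.Nonempty.hutch_iterate [Nonempty ι] {B : Set α} (hB : B.Nonempty) (k : ℕ) :
    ((Hutch f)^[k] B).Nonempty := by
  induction k with
  | zero => exact hB
  | succ k ih =>
    rw [Function.iterate_succ_apply']
    exact (ih.image _).mono (subset_iUnion (fun a => f a '' _) (Classical.arbitrary ι))

lemma IsCompact.hutch_iterate [TopologicalSpace α] [Finite ι] (hf : ∀ a, Continuous (f a))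
    {B : Set α} (hB : IsCompact B) (k : ℕ) : IsCompact ((Hutch f)^[k] B) := by
  induction k with
  | zero => exact hB
  | succ k ih =>
    rw [Function.iterate_succ_apply']
    exact isCompact_iUnion fun a => ih.image (hf a)

lemma hausdorffEDist_hutch_iterate_ne_top [MetricSpace α] [Finite ι] [Nonempty ι]
    (hf : ∀ a, Continuous (f a)) {A B : Set α} (hA : IsCompact A) (hAne : A.Nonempty)
    (hB : IsCompact B) (hBne : B.Nonempty) (k : ℕ) :
    hausdorffEDist ((Hutch f)^[k] B) A ≠ ⊤ :=
  hausdorffEDist_ne_top_of_nonempty_of_bounded (hBne.hutch_iterate k) hAne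
    (hB.hutch_iterate hf k).isBounded hA.isBounded

end Hutchinson

section HausdorffConvergence

variable {α : Type*} [MetricSpace α] {S : ℕ → Set α} {A : Set α}

lemma tendsto_infDist_of_tendsto_hausdorffDist (hfin : ∀ k, hausdorffEDist (S k) A ≠ ⊤)
    (hS : Tendsto (fun k => hausdorffDist (S k) A) atTop (𝓝 0)) {x : ℕ → α}
    (hx : ∀ k, x k ∈ S k) : Tendsto (fun k => infDist (x k) A) atTop (𝓝 0) :=
  squeeze_zero (fun _ => infDist_nonneg) (fun k => infDist_le_hausdorffDist_of_mem (hx k) (hfin k))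
    hS

lemma exists_tendsto_of_tendsto_hausdorffDist (hfin : ∀ k, hausdorffEDist (S k) A ≠ ⊤)
    (hS : Tendsto (fun k => hausdorffDist (S k) A) atTop (𝓝 0)) {a : α} (ha : a ∈ A) :
    ∃ x : ℕ → α, (∀ k, x k ∈ S k) ∧ Tendsto x atTop (𝓝 a) := by
  have hnear : ∀ k : ℕ, ∃ y ∈ S k, dist y a < hausdorffDist (S k) A + 1 / (k + 1) :=
    fun k => exists_dist_lt_of_hausdorffDist_lt' ha (by simp only [lt_add_iff_pos_right,
      Nat.one_div_pos_of_nat]) (hfin k)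
  choose x hxS hxa using hnear
  refine ⟨x, hxS, tendsto_iff_dist_tendsto_zero.2 ?_⟩
  exact squeeze_zero (fun _ => dist_nonneg) (fun k => (hxa k).le)
    (by simpa using hS.add tendsto_one_div_add_atTop_nhds_zero_nat)

end HausdorffConvergence

section Fibres

variable {α ι : Type*} {f : ι → α → α} {A : Set α}

lemma orbit_add_eq_fibreComp {σ ρ : ℕ → ι} {x₀ : α} {m j : ℕ}
    (h : ∀ l : Fin m, σ (j + l) = ρ l.rev) :
    orbit f σ x₀ (j + m) = fibreComp f ρ m (orbit f σ x₀ j) := by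
  induction m generalizing j with
  | zero => rfl
  | succ m ih =>
    have hj : σ j = ρ m := by simpa using h 0
    have hshift : ∀ l : Fin m, σ (j + 1 + l) = ρ l.rev := fun l => by
      simpa [Fin.val_rev, add_assoc, add_comm 1] using h l.succ
    rw [← add_assoc, add_right_comm, ih hshift]
    simp only [fibreComp, Function.comp_apply, orbit, hj]

lemma continuous_fibreComp [TopologicalSpace α] (hf : ∀ a, Continuous (f a)) (ρ : ℕ → ι)
    (m : ℕ) : Continuous (fibreComp f ρ m) := by
  induction m with
  | zero => exact continuous_id
  | succ m ih => exact ih.comp (hf (ρ m))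

lemma exists_fibreComp_image_subset [TopologicalSpace α] [T2Space α]
    (hf : ∀ a, Continuous (f a)) (hA : IsCompact A) (hFA : Hutch f A ⊆ A) (ρ : ℕ → ι)
    {V : Set α} (hV : IsOpen V) (hρ : fibre f A ρ ⊆ V) :
    ∃ m, fibreComp f ρ (m + 1) '' A ⊆ V := by
  have hcpt : ∀ K, IsCompact (fibreComp f ρ (K + 1) '' A) := fun K =>
    hA.image (continuous_fibreComp hf ρ _)
  have hanti : Antitone fun K => fibreComp f ρ (K + 1) '' A := by
    refine antitone_nat_of_succ_le fun K => ?_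
    calc fibreComp f ρ (K + 1 + 1) '' A = fibreComp f ρ (K + 1) '' (f (ρ (K + 1)) '' A) :=
          image_comp _ _ _
      _ ⊆ fibreComp f ρ (K + 1) '' A :=
          image_mono ((subset_iUnion (fun a => f a '' A) _).trans hFA)
  exact exists_subset_nhds_of_isCompact' hanti.directed_ge hcpt (fun K => (hcpt K).isClosed)
    fun x hx => hV.mem_nhds (hρ hx)

end Fibres

lemma Disjunctive.exists_ge {Γ : Type*} {σ : ℕ → Γ} (hσ : Disjunctive σ) {m : ℕ}
    (w : Fin m → Γ) (N : ℕ) : ∃ j, N ≤ j ∧ ∀ l : Fin m, σ (j + l) = w l := by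
  obtain ⟨j, hj⟩ := hσ (N + m) (Fin.append (fun _ => σ 0) w)
  refine ⟨j + N, le_add_self, fun l => ?_⟩
  simpa [add_assoc, Fin.append_right] using hj (Fin.natAdd N l)

section ChaosGame

variable {α ι : Type*} [MetricSpace α] {f : ι → α → α} {A : Set α} {σ : ℕ → ι} {x₀ : α}

lemma cinf_subset_of_tendsto_infDist (hA : IsClosed A) (hAne : A.Nonempty)
    (horb : Tendsto (fun k => infDist (orbit f σ x₀ k) A) atTop (𝓝 0)) :
    Cinf f σ x₀ ⊆ A := by
  intro y hy
  refine (hA.mem_iff_infDist_zero hAne).2 <|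
    le_antisymm (le_of_forall_pos_le_add fun ε hε => ?_) infDist_nonneg
  obtain ⟨K, hK⟩ := eventually_atTop.1 (horb.eventually (gt_mem_nhds hε))
  have htail : tailSet f σ x₀ K ⊆ {z | infDist z A ≤ ε} :=
    closure_minimal (by rintro _ ⟨k, hk, rfl⟩; exact (hK k hk).le)
      (isClosed_le (continuous_infDist_pt A) continuous_const)
  simpa using htail (mem_iInter.1 hy K)

lemma subset_cinf_of_disjunctive (hf : ∀ a, Continuous (f a)) (hA : IsCompact A)
    (hFA : Hutch f A ⊆ A) (hsf : StronglyFibred f A)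
    (horb : Tendsto (fun k => infDist (orbit f σ x₀ k) A) atTop (𝓝 0))
    (hσ : Disjunctive σ) : A ⊆ Cinf f σ x₀ := by
  intro a ha
  refine mem_iInter.2 fun K => Metric.mem_closure_iff.2 fun ε hε => ?_
  obtain ⟨ρ, hρ⟩ := hsf (ball a ε) isOpen_ball ⟨a, mem_ball_self hε, ha⟩
  obtain ⟨m, hm⟩ := exists_fibreComp_image_subset hf hA hFA ρ isOpen_ball hρ
  obtain ⟨δ, hδ, hthick⟩ := hA.exists_thickening_subset_open
    (isOpen_ball.preimage (continuous_fibreComp hf ρ (m + 1))) (image_subset_iff.1 hm)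
  obtain ⟨K', hK'⟩ := eventually_atTop.1 (horb.eventually (gt_mem_nhds hδ))
  -- a late occurrence of the reversed fibre word carries the orbit from near `A` into the ball
  obtain ⟨j, hj, hblock⟩ := hσ.exists_ge (fun l : Fin (m + 1) => ρ l.rev) (max K K')
  have hnear : orbit f σ x₀ j ∈ thickening δ A :=
    (mem_thickening_iff_infDist_lt ⟨a, ha⟩).2 (hK' j (le_of_max_le_right hj))
  refine ⟨_, ⟨j + (m + 1), by omega, rfl⟩, ?_⟩
  rw [dist_comm, ← mem_ball, orbit_add_eq_fibreComp hblock]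
  exact hthick hnear

variable [Finite ι] [Nonempty ι] {U : Set α}

lemma Attracts.tendsto_infDist_orbit (hf : ∀ a, Continuous (f a)) (hA : IsCompact A)
    (hAne : A.Nonempty) (hatt : Attracts f A U) (hx₀ : x₀ ∈ U) (σ : ℕ → ι) :
    Tendsto (fun k => infDist (orbit f σ x₀ k) A) atTop (𝓝 0) :=
  tendsto_infDist_of_tendsto_hausdorffDist
    (hausdorffEDist_hutch_iterate_ne_top hf hA hAne isCompact_singleton (singleton_nonempty x₀))
    (hatt {x₀} (singleton_nonempty x₀) isCompact_singleton (singleton_subset_iff.2 hx₀))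
    (orbit_mem_hutch_iterate σ x₀)

lemma Attracts.hutch_subset (hf : ∀ a, Continuous (f a)) (hA : IsCompact A)
    (hAne : A.Nonempty) (hatt : Attracts f A U) (hAU : A ⊆ U) : Hutch f A ⊆ A := by
  rintro _ ⟨_, ⟨a, rfl⟩, z, hz, rfl⟩
  have hfin := hausdorffEDist_hutch_iterate_ne_top hf hA hAne hA hAne
  have hconv := hatt A hAne hA hAU
  obtain ⟨x, hxS, hxz⟩ := exists_tendsto_of_tendsto_hausdorffDist hfin hconv hz
  have hto0 : Tendsto (fun k => infDist (f a (x k)) A) atTop (𝓝 0) :=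
    tendsto_infDist_of_tendsto_hausdorffDist (fun k => hfin (k + 1))
      (hconv.comp (tendsto_add_atTop_nat 1)) fun k => apply_mem_hutch_iterate_succ (hxS k) a
  have htoz : Tendsto (fun k => infDist (f a (x k)) A) atTop (𝓝 (infDist (f a z) A)) :=
    ((continuous_infDist_pt A).tendsto _).comp (((hf a).tendsto z).comp hxz)
  exact (hA.isClosed.mem_iff_infDist_zero hAne).2 (tendsto_nhds_unique htoz hto0)

end ChaosGame

section Porosity

variable {M : Type*} {ρ : M → M → ℝ}

lemma PorousWith.mono {Ψ Φ : Set M} (hΨ : PorousWith ρ Ψ) (hΦ : Φ ⊆ Ψ) : PorousWith ρ Φ := by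
  obtain ⟨lam, hlam₀, hlam₁, r₀, hr₀, hpor⟩ := hΨ
  refine ⟨lam, hlam₀, hlam₁, r₀, hr₀, fun ψ hψ r hr hrr₀ => ?_⟩
  obtain ⟨υ, hυ⟩ := hpor ψ (hΦ hψ) r hr hrr₀
  exact ⟨υ, hυ.trans (sdiff_subset_sdiff_right hΦ)⟩

lemma SigmaPorousWith.of_subset_iUnion {ι : Type*} [Countable ι] [Nonempty ι] {P : ι → Set M}
    (hP : ∀ i, PorousWith ρ (P i)) {Ψ : Set M} (hΨ : Ψ ⊆ ⋃ i, P i) : SigmaPorousWith ρ Ψ := by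
  obtain ⟨g, hg⟩ := exists_surjective_nat ι
  refine ⟨fun n => Ψ ∩ P (g n), fun n => (hP (g n)).mono inter_subset_right, ?_⟩
  rw [← inter_iUnion, hg.iUnion_comp P, inter_eq_left.2 hΨ]

end Porosity

section BaireDist

variable {Γ : Type*} {x y : ℕ → Γ} {n : ℕ}

lemma baireDist_of_ne (h : x ≠ y) :
    baireDist x y = ((2 : ℝ) ^ (sInf {i | x i ≠ y i} + 1))⁻¹ := by
  rw [baireDist, if_neg h, ← zpow_natCast, ← zpow_neg]
  push_cast
  ring_nf

lemma baireDist_le_of_eqOn (h : EqOn x y (Iio n)) : baireDist x y ≤ ((2 : ℝ) ^ (n + 1))⁻¹ := by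
  by_cases hxy : x = y
  · simp [baireDist, hxy]
  have hn : n ≤ sInf {i | x i ≠ y i} :=
    le_csInf (Function.ne_iff.1 hxy) fun i hi => not_lt.1 fun hin => hi (h hin)
  rw [baireDist_of_ne hxy]
  gcongr
  norm_num

lemma eqOn_of_baireDist_lt (h : baireDist x y < ((2 : ℝ) ^ (n + 1))⁻¹) : EqOn x y (Iic n) := by
  intro i hi
  by_contra hne
  have hxy : x ≠ y := fun hxy => hne (congrFun hxy i)
  have hle : sInf {i | x i ≠ y i} ≤ n := (Nat.sInf_le hne).trans hi
  rw [baireDist_of_ne hxy] at h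
  exact h.not_ge (by gcongr; norm_num)

lemma porousWith_baireDist_not_exists_block {m : ℕ} (w : Fin m → Γ) :
    PorousWith baireDist {σ : ℕ → Γ | ¬ ∃ j, ∀ l : Fin m, σ (j + l) = w l} := by
  refine ⟨((2 : ℝ) ^ (m + 1))⁻¹, by positivity,
    inv_lt_one_of_one_lt₀ (one_lt_pow₀ one_lt_two (Nat.succ_ne_zero m)), 1, one_pos,
    fun ψ _ r hr hr₁ => ?_⟩
  obtain ⟨n, hn, hn'⟩ := exists_nat_pow_near ((one_le_inv₀ hr).2 hr₁.le) one_lt_two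
  let υ : ℕ → Γ := fun i => if h : n ≤ i ∧ i < n + m then w ⟨i - n, by omega⟩ else ψ i
  refine ⟨υ, fun x hx => ?_⟩
  have hυx : EqOn υ x (Iic (n + m)) := by
    refine eqOn_of_baireDist_lt (hx.trans_le ?_)
    calc ((2 : ℝ) ^ (m + 1))⁻¹ * r ≤ ((2 : ℝ) ^ (m + 1))⁻¹ * ((2 : ℝ) ^ n)⁻¹ := by
          gcongr
          exact (le_inv_comm₀ (by positivity) hr).1 hn
      _ = ((2 : ℝ) ^ (n + m + 1))⁻¹ := by rw [← mul_inv, ← pow_add]; ring_nf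
  have hψx : EqOn ψ x (Iio n) := fun i (hi : i < n) => by
    rw [← hυx (show i ≤ n + m by omega)]
    simp [υ, hi.not_ge]
  refine ⟨(baireDist_le_of_eqOn hψx).trans_lt ((inv_lt_comm₀ hr (by positivity)).1 hn'),
    fun hxw => hxw ⟨n, fun l => ?_⟩⟩
  rw [← hυx (show n + l ≤ n + m by omega)]
  simp [υ]

end BaireDist

/-- Theorem "porousthm": for a strongly-fibred attractor `A` and
`x₀` in its basin, the set of driving sequences `σ` for which the chaos game fails to
yield `A` (i.e. `C_∞(x₀,σ) ≠ A`) is σ-porous in the Cantor space with the Baire metric. -/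
theorem chaosGame_faulty_sequences_sigmaPorous
    (f : Λ → X → X) (hf : ∀ a : Λ, Continuous (f a))
    (A : Set X) (hA : IsAttractor f A) (hsf : StronglyFibred f A)
    (x₀ : X) (hx₀ : x₀ ∈ basin f A) :
    SigmaPorousWith baireDist {σ : ℕ → Λ | Cinf f σ x₀ ≠ A} := by
  obtain ⟨hAne, hAc, -⟩ := hA
  obtain ⟨U, ⟨-, hAU, hatt⟩, hx₀U⟩ := hx₀
  have hFA : Hutch f A ⊆ A := hatt.hutch_subset hf hAc hAne hAU
  have hcinf : ∀ σ : ℕ → Λ, Disjunctive σ → Cinf f σ x₀ = A := fun σ hσ => by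
    have horb := hatt.tendsto_infDist_orbit hf hAc hAne hx₀U σ
    exact (cinf_subset_of_tendsto_infDist hAc.isClosed hAne horb).antisymm
      (subset_cinf_of_disjunctive hf hAc hFA hsf horb hσ)
  have : Nonempty (Σ m, Fin m → Λ) := ⟨⟨0, Fin.elim0⟩⟩
  refine SigmaPorousWith.of_subset_iUnion
    (fun p : Σ m, Fin m → Λ => porousWith_baireDist_not_exists_block p.2) fun σ hσ => ?_
  obtain ⟨m, hm⟩ := not_forall.1 fun hd => hσ (hcinf σ hd)
  obtain ⟨w, hw⟩ := not_forall.1 hm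
  exact mem_iUnion.2 ⟨⟨m, w⟩, hw⟩
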